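/- Column (feature) update monotonicity: let C_W' : W → W* be any clustering function such that for every w ∈ W, D(p(·|w) ‖ p̂(·|C_W' w)) ≤ D(p(·|w) ‖ p̂(·|C_W w)), where p̂ is computed from the current pair (C_X, C_W); in particular this holds for the pointwise update C_W'(w) = argmin_{w* ∈ W*} D(p(·|w) ‖ p̂(·|w*)). Then the objective does not increase: ℓ_A(C_X, C_W') ≤ ℓ_A(C_X, C_W). -/

import Mathlib

open scoped BigOperators

noncomputable section

/-- Kullback–Leibler divergence `D(g‖h)` between nonnegative functions on a finite type,
`D(g‖h) = ∑_{t : g t > 0} g t * log (g t / h t)`, with the convention `D(g‖h) = ⊤`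
whenever `g t > 0 = h t` for some `t`. -/
def KLdiv {T : Type*} [Fintype T] (g h : T → ℝ) : EReal :=
  if ∃ t, 0 < g t ∧ h t = 0 then ⊤
  else ((∑ t ∈ Finset.univ.filter (fun t => 0 < g t),
      g t * Real.log (g t / h t) : ℝ) : EReal)

/-- Row marginal `p₁(x) = ∑_w p(x,w)`. -/
def marg₁ {A B : Type*} [Fintype B] (p : A × B → ℝ) (x : A) : ℝ := ∑ w, p (x, w)

/-- Column marginal `p₂(w) = ∑_x p(x,w)`. -/
def marg₂ {A B : Type*} [Fintype A] (p : A × B → ℝ) (w : B) : ℝ := ∑ x, p (x, w)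

/-- Co-clustered distribution `p*(x*,w*) = ∑_{x : C_X x = x*} ∑_{w : C_W w = w*} p(x,w)`. -/
def coclust {A B As Bs : Type*} [Fintype A] [Fintype B] [DecidableEq As] [DecidableEq Bs]
    (p : A × B → ℝ) (CX : A → As) (CW : B → Bs) : As × Bs → ℝ :=
  fun c => ∑ x ∈ Finset.univ.filter (fun x => CX x = c.1),
             ∑ w ∈ Finset.univ.filter (fun w => CW w = c.2), p (x, w)

/-- Approximating distribution
`p̂(x,w) = p*(C_X x, C_W w) · p₁(x) · p₂(w) / (p₁*(C_X x) · p₂*(C_W w))`. -/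
def approx {A B As Bs : Type*} [Fintype A] [Fintype B] [Fintype As] [Fintype Bs]
    [DecidableEq As] [DecidableEq Bs]
    (p : A × B → ℝ) (CX : A → As) (CW : B → Bs) : A × B → ℝ :=
  fun c =>
    coclust p CX CW (CX c.1, CW c.2) * marg₁ p c.1 * marg₂ p c.2 /
      (marg₁ (coclust p CX CW) (CX c.1) * marg₂ (coclust p CX CW) (CW c.2))

/-- Conditional distribution `p(w|x) = p(x,w)/p₁(x)` on `B`. -/
def condRow {A B : Type*} [Fintype B] (p : A × B → ℝ) (x : A) : B → ℝ :=
  fun w => p (x, w) / marg₁ p x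

/-- Conditional distribution `p(x|w) = p(x,w)/p₂(w)` on `A`. -/
def condCol {A B : Type*} [Fintype A] (p : A × B → ℝ) (w : B) : A → ℝ :=
  fun x => p (x, w) / marg₂ p w

/-- Conditional approximating distribution
`p̂(w|x*) = p*(x*, C_W w) · p₂(w) / (p₁*(x*) · p₂*(C_W w))` on `B`. -/
def approxCondRow {A B As Bs : Type*} [Fintype A] [Fintype B] [Fintype As] [Fintype Bs]
    [DecidableEq As] [DecidableEq Bs]
    (p : A × B → ℝ) (CX : A → As) (CW : B → Bs) (xs : As) : B → ℝ :=
  fun w =>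
    coclust p CX CW (xs, CW w) * marg₂ p w /
      (marg₁ (coclust p CX CW) xs * marg₂ (coclust p CX CW) (CW w))

/-- Conditional approximating distribution
`p̂(x|w*) = p*(C_X x, w*) · p₁(x) / (p₂*(w*) · p₁*(C_X x))` on `A`. -/
def approxCondCol {A B As Bs : Type*} [Fintype A] [Fintype B] [Fintype As] [Fintype Bs]
    [DecidableEq As] [DecidableEq Bs]
    (p : A × B → ℝ) (CX : A → As) (CW : B → Bs) (ws : Bs) : A → ℝ :=
  fun x =>
    coclust p CX CW (CX x, ws) * marg₁ p x /
      (marg₂ (coclust p CX CW) ws * marg₁ (coclust p CX CW) (CX x))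

/-- Mutual information `I(p) = ∑_{x,w} p(x,w) · log (p(x,w)/(p₁(x)·p₂(w)))`
(summing over all pairs; used for the strictly positive original distribution). -/
def mutualInfoFull {A B : Type*} [Fintype A] [Fintype B] (p : A × B → ℝ) : ℝ :=
  ∑ x, ∑ w, p (x, w) * Real.log (p (x, w) / (marg₁ p x * marg₂ p w))

/-- Mutual information `I(p*) = ∑_{(x*,w*) : p*(x*,w*) > 0} p*(x*,w*) ·
log (p*(x*,w*)/(p₁*(x*)·p₂*(w*)))` (summing only over positive entries). -/
def mutualInfoPos {A B : Type*} [Fintype A] [Fintype B] (p : A × B → ℝ) : ℝ :=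
  ∑ c ∈ Finset.univ.filter (fun c : A × B => 0 < p c),
    p c * Real.log (p c / (marg₁ p c.1 * marg₂ p c.2))

/-- The co-clustering objective `ℓ_A(C_X, C_W) = I(p) − I(p*)`. -/
def lossA {A B As Bs : Type*} [Fintype A] [Fintype B] [Fintype As] [Fintype Bs]
    [DecidableEq As] [DecidableEq Bs]
    (p : A × B → ℝ) (CX : A → As) (CW : B → Bs) : ℝ :=
  mutualInfoFull p - mutualInfoPos (coclust p CX CW)

/-- The elastic coupled co-clustering objective
`ℓ_T(C_Y, C_Z) = I(q) − I(q*) + α·D(q₁*‖π) + β·D(q₂*‖ρ)`. -/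
def lossT {A B As Bs : Type*} [Fintype A] [Fintype B] [Fintype As] [Fintype Bs]
    [DecidableEq As] [DecidableEq Bs]
    (q : A × B → ℝ) (CY : A → As) (CZ : B → Bs) (π : As → ℝ) (ρ : Bs → ℝ)
    (α β : ℝ) : EReal :=
  ((mutualInfoFull q - mutualInfoPos (coclust q CY CZ) : ℝ) : EReal)
    + (α : EReal) * KLdiv (marg₁ (coclust q CY CZ)) π
    + (β : EReal) * KLdiv (marg₂ (coclust q CY CZ)) ρ

end

/-! For a column clustering `C`, the expected divergence `∑_w p₂(w) D(p(·|w) ‖ p̂(·|C w))`, with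
`p̂` built from `(C_X, C_W)`, equals `I(p) − ∑_c q_C(c) · log (p*(c) / (p₁*(c.1) p₂*(c.2)))`, where
`q_C` is the co-clustered distribution of `(C_X, C)`. For `C = C_W` the subtracted term is `I(p*)`,
so the expected divergence is `ℓ_A(C_X, C_W)`. For `C = C_W'` the subtracted term is at most
`I(q_{C_W'})` by the log-sum inequality, because `q_{C_W'}` and `p*` have the same row marginal.
So `ℓ_A(C_X, C_W')` is at most the expected divergence for `C_W'`, which by hypothesis is at most
the one for `C_W`, namely `ℓ_A(C_X, C_W)`. -/

open Finset Real

theorem sub_le_mul_log_div {a b : ℝ} (ha : 0 ≤ a) (hb : 0 < b) : a - b ≤ a * log (a / b) := by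
  have := mul_le_mul_of_nonneg_left (self_sub_one_le_mul_log (div_nonneg ha hb.le)) hb.le
  rwa [mul_sub, mul_one, mul_div_cancel₀ _ hb.ne', ← mul_assoc, mul_div_cancel₀ _ hb.ne'] at this

theorem sum_mul_log_div_nonneg {ι : Type*} [Fintype ι] {a b : ι → ℝ} (ha : ∀ i, 0 ≤ a i)
    (hb : ∀ i, 0 ≤ b i) (hab : ∀ i, 0 < a i → 0 < b i) (hsum : ∑ i, b i ≤ ∑ i, a i) :
    0 ≤ ∑ i, a i * log (a i / b i) := by
  have hterm : ∀ i, a i - b i ≤ a i * log (a i / b i) := fun i => by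
    rcases (ha i).eq_or_lt with hai | hai
    · simp [← hai, hb i]
    · exact sub_le_mul_log_div hai.le (hab i hai)
  calc (0 : ℝ) ≤ ∑ i, (a i - b i) := by rw [sum_sub_distrib]; linarith
    _ ≤ _ := sum_le_sum fun i _ => hterm i

section KL

variable {T : Type*} [Fintype T] {g h : T → ℝ}

theorem KLdiv_eq_sum (hg : ∀ t, 0 < g t) (hh : ∀ t, h t ≠ 0) :
    KLdiv g h = ((∑ t, g t * log (g t / h t) : ℝ) : EReal) := by
  rw [KLdiv, if_neg (by simpa using fun t _ => hh t), filter_true_of_mem fun t _ => hg t]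

theorem ne_zero_of_KLdiv_ne_top (hKL : KLdiv g h ≠ ⊤) {t : T} (ht : 0 < g t) : h t ≠ 0 :=
  fun h0 => hKL (if_pos ⟨t, ht, h0⟩)

end KL

theorem le_marg₁ {A B : Type*} [Fintype B] {q : A × B → ℝ} (hq : ∀ c, 0 ≤ q c) (a : A) (b : B) :
    q (a, b) ≤ marg₁ q a :=
  single_le_sum (fun b _ => hq (a, b)) (mem_univ b)

theorem le_marg₂ {A B : Type*} [Fintype A] {q : A × B → ℝ} (hq : ∀ c, 0 ≤ q c) (a : A) (b : B) :
    q (a, b) ≤ marg₂ q b :=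
  single_le_sum (fun a _ => hq (a, b)) (mem_univ a)

theorem condCol_pos {A B : Type*} [Fintype A] {q : A × B → ℝ} (hq : ∀ c, 0 < q c) (b : B)
    (a : A) : 0 < condCol q b a :=
  div_pos (hq _) ((hq _).trans_le (le_marg₂ (fun c => (hq c).le) a b))

section MutualInfo

variable {A B : Type*} [Fintype A] [Fintype B]

noncomputable def pointwiseMutualInfo (q : A × B → ℝ) (c : A × B) : ℝ :=
  log (q c / (marg₁ q c.1 * marg₂ q c.2))

theorem mutualInfoPos_eq_sum_mul_pointwiseMutualInfo {q : A × B → ℝ} (hq : ∀ c, 0 ≤ q c) :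
    mutualInfoPos q = ∑ c, q c * pointwiseMutualInfo q c :=
  sum_filter_of_ne fun c _ hc => (hq c).lt_of_ne' (left_ne_zero_of_mul hc)

theorem sum_mul_pointwiseMutualInfo_le_mutualInfoPos {P Q : A × B → ℝ}
    (hP : ∀ c, 0 ≤ P c) (hQ : ∀ c, 0 ≤ Q c) (hQP : ∀ c, 0 < Q c → 0 < P c)
    (hmarg : marg₁ Q = marg₁ P) :
    ∑ c, Q c * pointwiseMutualInfo P c ≤ mutualInfoPos Q := by
  -- compare `Q` with `P` rescaled to the column marginals of `Q`
  let R : A × B → ℝ := fun c => P c * marg₂ Q c.2 / marg₂ P c.2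
  have hR : ∀ c, 0 < Q c → 0 < R c := fun ⟨a, b⟩ hc =>
    div_pos (mul_pos (hQP _ hc) (hc.trans_le (le_marg₂ hQ a b)))
      ((hQP _ hc).trans_le (le_marg₂ hP a b))
  have hRsum : ∑ c, R c ≤ ∑ c, Q c := by
    simp only [R, Fintype.sum_prod_type_right]
    refine sum_le_sum fun b _ => ?_
    rw [← sum_div, ← sum_mul]
    change marg₂ P b * marg₂ Q b / marg₂ P b ≤ marg₂ Q b
    rcases eq_or_ne (marg₂ P b) 0 with h | h
    · rw [h, zero_mul, zero_div]
      exact sum_nonneg fun a _ => hQ (a, b)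
    · exact (mul_div_cancel_left₀ _ h).le
  have hgibbs := sum_mul_log_div_nonneg (b := R) hQ
    (fun c => div_nonneg (mul_nonneg (hP c) (sum_nonneg fun a _ => hQ _))
      (sum_nonneg fun a _ => hP _)) hR hRsum
  rw [mutualInfoPos_eq_sum_mul_pointwiseMutualInfo hQ, ← sub_nonneg, ← sum_sub_distrib]
  refine hgibbs.trans_eq (sum_congr rfl fun ⟨a, b⟩ _ => ?_)
  rcases (hQ (a, b)).eq_or_lt with h0 | hpos
  · simp [← h0]
  have hPc := hQP _ hpos
  have hP₁ : marg₁ P a ≠ 0 := (hPc.trans_le (le_marg₁ hP a b)).ne'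
  have hP₂ : marg₂ P b ≠ 0 := (hPc.trans_le (le_marg₂ hP a b)).ne'
  have hQ₂ : marg₂ Q b ≠ 0 := (hpos.trans_le (le_marg₂ hQ a b)).ne'
  rw [pointwiseMutualInfo, pointwiseMutualInfo, hmarg, ← mul_sub,
    ← log_div (div_ne_zero hpos.ne' (mul_ne_zero hP₁ hQ₂))
      (div_ne_zero hPc.ne' (mul_ne_zero hP₁ hP₂))]
  congr 2
  simp only [R]
  field_simp

end MutualInfo

section Coclust

variable {X W Xs Ws : Type*} [Fintype X] [Fintype W] [DecidableEq Xs] [DecidableEq Ws]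
  {p : X × W → ℝ} {CX : X → Xs}

theorem coclust_eq_sum_filter (C : W → Ws) (c : Xs × Ws) :
    coclust p CX C c = ∑ xw with Prod.map CX C xw = c, p xw := by
  rw [coclust, ← sum_product', ← filter_product, ← univ_product_univ]
  simp [Prod.ext_iff]

theorem le_coclust (hp : ∀ c, 0 ≤ p c) (C : W → Ws) (x : X) (w : W) :
    p (x, w) ≤ coclust p CX C (CX x, C w) := by
  rw [coclust_eq_sum_filter]
  exact single_le_sum (fun xw _ => hp xw) (by simp)

theorem coclust_nonneg (hp : ∀ c, 0 ≤ p c) (C : W → Ws) (c : Xs × Ws) : 0 ≤ coclust p CX C c :=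
  sum_nonneg fun _ _ => sum_nonneg fun _ _ => hp _

theorem exists_of_coclust_ne_zero {C : W → Ws} {c : Xs × Ws} (hc : coclust p CX C c ≠ 0) :
    ∃ x w, CX x = c.1 ∧ C w = c.2 := by
  obtain ⟨x, hx, hxc⟩ := exists_ne_zero_of_sum_ne_zero hc
  obtain ⟨w, hw, -⟩ := exists_ne_zero_of_sum_ne_zero hxc
  exact ⟨x, w, (mem_filter.1 hx).2, (mem_filter.1 hw).2⟩

theorem sum_coclust_mul [Fintype Xs] [Fintype Ws] (C : W → Ws) (f : Xs × Ws → ℝ) :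
    ∑ c, coclust p CX C c * f c = ∑ x, ∑ w, p (x, w) * f (CX x, C w) :=
  calc ∑ c, coclust p CX C c * f c
      = ∑ c, ∑ xw with Prod.map CX C xw = c, p xw * f (Prod.map CX C xw) :=
        sum_congr rfl fun c _ => by
          rw [coclust_eq_sum_filter, sum_mul]
          exact sum_congr rfl fun xw h => by rw [(mem_filter.1 h).2]
    _ = ∑ xw, p xw * f (Prod.map CX C xw) := sum_fiberwise _ _ _
    _ = _ := Fintype.sum_prod_type _

theorem marg₁_coclust [Fintype Ws] (C : W → Ws) (xs : Xs) :
    marg₁ (coclust p CX C) xs = ∑ x with CX x = xs, marg₁ p x := by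
  simp only [marg₁, coclust]
  rw [sum_comm]
  exact sum_congr rfl fun x _ => sum_fiberwise _ _ _

end Coclust

section Approx

variable {X W Xs Ws : Type*} [Fintype X] [Fintype W] [Fintype Xs] [Fintype Ws]
  [DecidableEq Xs] [DecidableEq Ws] {p : X × W → ℝ} (CX : X → Xs) (CW : W → Ws)

theorem approxCondCol_pos (hp : ∀ c, 0 < p c) (w : W) (x : X) :
    0 < approxCondCol p CX CW (CW w) x := by
  have hP0 := coclust_nonneg (CX := CX) (fun c => (hp c).le) CW
  have hP : 0 < coclust p CX CW (CX x, CW w) :=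
    (hp _).trans_le (le_coclust (fun c => (hp c).le) CW x w)
  exact div_pos (mul_pos hP ((hp (x, w)).trans_le (le_marg₁ (fun c => (hp c).le) x w)))
    (mul_pos (hP.trans_le (le_marg₂ hP0 _ _)) (hP.trans_le (le_marg₁ hP0 _ _)))

theorem log_condCol_div_approxCondCol (hp : ∀ c, 0 < p c) {ws : Ws} {x : X} (w : W)
    (hne : approxCondCol p CX CW ws x ≠ 0) :
    log (condCol p w x / approxCondCol p CX CW ws x)
      = pointwiseMutualInfo p (x, w) - pointwiseMutualInfo (coclust p CX CW) (CX x, ws) := by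
  have hp₂ : marg₂ p w ≠ 0 := ((hp _).trans_le (le_marg₂ (fun c => (hp c).le) x w)).ne'
  simp only [approxCondCol, div_ne_zero_iff, mul_ne_zero_iff] at hne
  obtain ⟨⟨hP, hp₁⟩, hP₂, hP₁⟩ := hne
  rw [pointwiseMutualInfo, pointwiseMutualInfo,
    ← log_div (div_ne_zero (hp _).ne' (mul_ne_zero hp₁ hp₂)) (div_ne_zero hP (mul_ne_zero hP₁ hP₂))]
  congr 1
  simp only [condCol, approxCondCol]
  field_simp

theorem sum_marg₂_mul_sum_condCol_mul_log (hp : ∀ c, 0 < p c) (C : W → Ws)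
    (hC : ∀ w x, approxCondCol p CX CW (C w) x ≠ 0) :
    ∑ w, marg₂ p w * ∑ x, condCol p w x * log (condCol p w x / approxCondCol p CX CW (C w) x)
      = mutualInfoFull p - ∑ c, coclust p CX C c * pointwiseMutualInfo (coclust p CX CW) c :=
  calc _ = ∑ w, ∑ x, p (x, w) * log (condCol p w x / approxCondCol p CX CW (C w) x) := by
        refine sum_congr rfl fun w _ => ?_
        rw [mul_sum]
        refine sum_congr rfl fun x _ => ?_
        rw [condCol, ← mul_assoc, mul_div_cancel₀ _
          ((hp _).trans_le (le_marg₂ (fun c => (hp c).le) x w)).ne']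
    _ = ∑ x, ∑ w, (p (x, w) * pointwiseMutualInfo p (x, w)
          - p (x, w) * pointwiseMutualInfo (coclust p CX CW) (CX x, C w)) := by
        rw [sum_comm]
        refine sum_congr rfl fun x _ => sum_congr rfl fun w _ => ?_
        rw [log_condCol_div_approxCondCol CX CW hp w (hC w x), mul_sub]
    _ = _ := by
        rw [sum_coclust_mul]
        simp only [sum_sub_distrib]
        rfl

end Approx

theorem col_update_monotone_general {X W Xs Ws : Type*} [Fintype X] [Fintype W]
    [Fintype Xs] [Fintype Ws] [DecidableEq Xs] [DecidableEq Ws]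
    (p : X × W → ℝ) (hpos : ∀ c, 0 < p c)
    (CX : X → Xs) (CW : W → Ws) (CW' : W → Ws)
    (hupd : ∀ w : W,
      KLdiv (condCol p w) (approxCondCol p CX CW (CW' w))
        ≤ KLdiv (condCol p w) (approxCondCol p CX CW (CW w))) :
    lossA p CX CW' ≤ lossA p CX CW := by
  have hp : ∀ c, 0 ≤ p c := fun c => (hpos c).le
  have hKL (w : W) :=
    KLdiv_eq_sum (condCol_pos hpos w) fun x => (approxCondCol_pos CX CW hpos w x).ne'
  have hne (w : W) (x : X) : approxCondCol p CX CW (CW' w) x ≠ 0 :=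
    ne_zero_of_KLdiv_ne_top (ne_top_of_le_ne_top (by rw [hKL]; exact EReal.coe_ne_top _) (hupd w))
      (condCol_pos hpos w x)
  have hle (w : W) :
      ∑ x, condCol p w x * log (condCol p w x / approxCondCol p CX CW (CW' w) x)
        ≤ ∑ x, condCol p w x * log (condCol p w x / approxCondCol p CX CW (CW w) x) := by
    have h := hupd w
    rwa [hKL, KLdiv_eq_sum (condCol_pos hpos w) (hne w), EReal.coe_le_coe_iff] at h
  have hsupp : ∀ c, 0 < coclust p CX CW' c → 0 < coclust p CX CW c := by
    rintro ⟨xs, ws⟩ hc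
    obtain ⟨x, w, rfl, rfl⟩ := exists_of_coclust_ne_zero hc.ne'
    have h := hne w x
    simp only [approxCondCol, div_ne_zero_iff, mul_ne_zero_iff] at h
    exact (coclust_nonneg hp CW _).lt_of_ne' h.1.1
  calc lossA p CX CW' = mutualInfoFull p - mutualInfoPos (coclust p CX CW') := rfl
    _ ≤ mutualInfoFull p - ∑ c, coclust p CX CW' c * pointwiseMutualInfo (coclust p CX CW) c :=
        sub_le_sub_left (sum_mul_pointwiseMutualInfo_le_mutualInfoPos (coclust_nonneg hp CW)
          (coclust_nonneg hp CW') hsupp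
          (funext fun xs => by rw [marg₁_coclust, marg₁_coclust])) _
    _ = ∑ w, marg₂ p w * ∑ x, condCol p w x *
          log (condCol p w x / approxCondCol p CX CW (CW' w) x) :=
        (sum_marg₂_mul_sum_condCol_mul_log CX CW hpos CW' hne).symm
    _ ≤ ∑ w, marg₂ p w * ∑ x, condCol p w x *
          log (condCol p w x / approxCondCol p CX CW (CW w) x) :=
        sum_le_sum fun w _ => mul_le_mul_of_nonneg_left (hle w) (sum_nonneg fun x _ => hp _)
    _ = mutualInfoFull p - ∑ c, coclust p CX CW c * pointwiseMutualInfo (coclust p CX CW) c :=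
        sum_marg₂_mul_sum_condCol_mul_log CX CW hpos CW fun w x =>
          (approxCondCol_pos CX CW hpos w x).ne'
    _ = lossA p CX CW := by
        rw [lossA, mutualInfoPos_eq_sum_mul_pointwiseMutualInfo (coclust_nonneg hp CW)]

/-- Column (feature) update monotonicity: if for every `w`,
`D(p(·|w) ‖ p̂(·|C_W' w)) ≤ D(p(·|w) ‖ p̂(·|C_W w))` (with `p̂` computed from the
current pair `(C_X, C_W)`), then `ℓ_A(C_X, C_W') ≤ ℓ_A(C_X, C_W)`. -/
theorem col_update_monotone {X W Xs Ws : Type*} [Fintype X] [Fintype W] [Nonempty X] [Nonempty W]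
    [Fintype Xs] [Fintype Ws] [DecidableEq Xs] [DecidableEq Ws]
    (p : X × W → ℝ) (hpos : ∀ c, 0 < p c) (hsum : ∑ c, p c = 1)
    (CX : X → Xs) (CW : W → Ws) (CW' : W → Ws)
    (hupd : ∀ w : W,
      KLdiv (condCol p w) (approxCondCol p CX CW (CW' w))
        ≤ KLdiv (condCol p w) (approxCondCol p CX CW (CW w))) :
    lossA p CX CW' ≤ lossA p CX CW :=
  col_update_monotone_general p hpos CX CW CW' hupd
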